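/- arXiv:1008.1978 — 2 statements merged into one kernel-verified Lean document; each statement's English description precedes it below -/
import Mathlib

section
/- For a finite abelian group G in which the maximal order of an element is m, the Davenport-type constant satisfies n(G) < m(1 + log(|G|/m)), where n(G) is the length of the longest sequence of elements of G with no nonempty zero-sum subsequence. -/
/-- A sequence in an additive group with no nonempty zero-sum subsequence. -/
def IsZeroSumFree {G : Type*} [AddCommGroup G] {k : ℕ} (g : Fin k → G) : Prop :=
  ∀ S : Finset (Fin k), S.Nonempty → ∑ i ∈ S, g i ≠ 0

/-- The Davenport-type constant: the maximal length of a zero-sum-free sequence. -/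
noncomputable def davenport (G : Type*) [AddCommGroup G] [Fintype G] : ℕ :=
  sSup {k : ℕ | ∃ g : Fin k → G, IsZeroSumFree g}

/-!
The values `ψ (g i)` of the complex characters `ψ` of `G` are `m`-th roots of unity. A greedy
choice of targets `c i` shows that once `k ≥ m (1 + log (|G| / m))`, every character has
`ψ (g i) = c i` for some `i`: for the first `j = ⌈m log (|G| / m)⌉` indices take the value shared
by most of the characters not yet hit, which leaves at most `|G| (1 - 1/m) ^ j ≤ m` of them, then
spend one index on each of those. Now `∑ ψ, ∏ i, (1 - ψ (g i) / c i)` vanishes termwise; but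
expanding the product and using orthogonality of characters, only the empty subsequence
survives, since no other one sums to `0`, and the sum is `|G|`.
-/

open Finset Real

section Covering

variable {ι α β : Type*} [DecidableEq ι] [DecidableEq β] (v : ι → α → β)

def uncovered (S : Finset ι) (c : ι → β) (R : Finset α) : Finset α :=
  {a ∈ R | ∀ i ∈ S, v i a ≠ c i}

lemma uncovered_insert {i : ι} {S : Finset ι} (hi : i ∉ S) (c : ι → β) (b : β)
    (R : Finset α) :
    uncovered v (insert i S) (Function.update c i b) R =
      uncovered v S c {a ∈ R | v i a ≠ b} := by
  have hc : ∀ j ∈ S, Function.update c i b j = c j := fun j hj =>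
    Function.update_of_ne (ne_of_mem_of_not_mem hj hi) _ _
  ext a
  simp +contextual [uncovered, hc, and_assoc]

lemma uncovered_union {S T : Finset ι} (h : Disjoint S T) (c d : ι → β) (R : Finset α) :
    uncovered v (S ∪ T) (S.piecewise c d) R = uncovered v T d (uncovered v S c R) := by
  have hT : ∀ j ∈ T, S.piecewise c d j = d j := fun j hj =>
    piecewise_eq_of_notMem _ _ _ (disjoint_right.1 h hj)
  ext a
  simp +contextual [uncovered, or_imp, forall_and, hT, and_assoc]

lemma exists_card_filter_ne_le [Nonempty β] {f : α → β} {R : Finset α} {s : Finset β}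
    (hf : ∀ a ∈ R, f a ∈ s) :
    ∃ b, (#{a ∈ R | f a ≠ b} : ℝ) ≤ (1 - (#s : ℝ)⁻¹) * #R := by
  rcases R.eq_empty_or_nonempty with rfl | ⟨a, ha⟩
  · exact ⟨Classical.arbitrary β, by simp⟩
  have hs : s.Nonempty := ⟨f a, hf a ha⟩
  obtain ⟨b, -, hb⟩ := exists_le_card_fiber_of_nsmul_le_card_of_maps_to hf hs
    (b := (#R : ℝ) / #s) (by rw [nsmul_eq_mul, mul_div_cancel₀ _ (by simp [hs.ne_empty])])
  refine ⟨b, ?_⟩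
  have hR : (#R : ℝ) = #{a ∈ R | f a = b} + #{a ∈ R | f a ≠ b} := by
    exact_mod_cast (card_filter_add_card_filter_not (s := R) (fun a => f a = b)).symm
  rw [sub_mul, one_mul, inv_mul_eq_div]
  linarith

lemma exists_card_uncovered_le [Nonempty β] {s : Finset β} (hv : ∀ i a, v i a ∈ s)
    (S : Finset ι) (R : Finset α) :
    ∃ c, (#(uncovered v S c R) : ℝ) ≤ (1 - (#s : ℝ)⁻¹) ^ #S * #R := by
  have hq : 0 ≤ 1 - (#s : ℝ)⁻¹ := sub_nonneg.2 (Nat.cast_inv_le_one _)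
  induction S using Finset.induction_on generalizing R with
  | empty => exact ⟨fun _ => Classical.arbitrary β, by simp [uncovered]⟩
  | insert i S hi ih =>
    obtain ⟨b, hb⟩ := exists_card_filter_ne_le (R := R) fun a _ => hv i a
    obtain ⟨c, hc⟩ := ih {a ∈ R | v i a ≠ b}
    refine ⟨Function.update c i b, ?_⟩
    rw [uncovered_insert v hi, card_insert_of_notMem hi, pow_succ, mul_assoc]
    exact hc.trans (by gcongr)

lemma exists_uncovered_eq_empty [Nonempty β] (S : Finset ι) (R : Finset α) (h : #R ≤ #S) :
    ∃ c, uncovered v S c R = ∅ := by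
  induction S using Finset.induction_on generalizing R with
  | empty => exact ⟨fun _ => Classical.arbitrary β, by simp_all [uncovered]⟩
  | insert i S hi ih =>
    rcases R.eq_empty_or_nonempty with rfl | ⟨a, ha⟩
    · exact ⟨fun _ => Classical.arbitrary β, filter_empty _⟩
    have hlt : #{x ∈ R | v i x ≠ v i a} < #R :=
      card_lt_card (filter_ssubset.2 ⟨a, ha, by simp⟩)
    rw [card_insert_of_notMem hi] at h
    obtain ⟨c, hc⟩ := ih {x ∈ R | v i x ≠ v i a} (by omega)
    exact ⟨Function.update c i (v i a), by rw [uncovered_insert v hi, hc]⟩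

end Covering

lemma one_sub_inv_pow_mul_le {m n : ℝ} {j : ℕ} (hm : 1 ≤ m) (hn : 0 < n)
    (hj : m * log (n / m) ≤ j) : (1 - m⁻¹) ^ j * n ≤ m := by
  have hm0 : 0 < m := by linarith
  calc (1 - m⁻¹) ^ j * n ≤ exp (-m⁻¹) ^ j * n := by
        gcongr
        · exact sub_nonneg.2 (inv_le_one_of_one_le₀ hm)
        · exact one_sub_le_exp_neg _
    _ = exp (-(j / m)) * n := by rw [← exp_nat_mul]; ring_nf
    _ ≤ exp (-log (n / m)) * n := by
        gcongr
        rwa [le_div_iff₀ hm0, mul_comm]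
    _ = m := by rw [exp_neg, exp_log (by positivity)]; field_simp

theorem exists_forall_exists_apply_eq_of_le {ι α β : Type*} [Fintype ι] [Fintype α]
    (v : ι → α → β) {s : Finset β} (hv : ∀ i a, v i a ∈ s) (hs : s.Nonempty)
    (hsα : #s ≤ Fintype.card α)
    (hι : #s * (1 + log (Fintype.card α / #s)) ≤ Fintype.card ι) :
    ∃ c : ι → β, ∀ a, ∃ i, v i a = c i := by
  classical
  have : Nonempty β := ⟨hs.choose⟩
  set m := #s
  set n := Fintype.card α
  have hm : (1 : ℝ) ≤ m := by exact_mod_cast hs.card_pos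
  have hmn : (m : ℝ) ≤ n := by exact_mod_cast hsα
  have hlog : 0 ≤ log (n / m) := log_nonneg (by rw [le_div_iff₀ (by linarith)]; linarith)
  have hmι : m ≤ Fintype.card ι := by
    exact_mod_cast (le_mul_of_one_le_right (by linarith) (by linarith)).trans hι
  set j := ⌈m * log (n / m)⌉₊
  have hj : j + m ≤ Fintype.card ι := by
    have : m * log (n / m) ≤ ((Fintype.card ι - m : ℕ) : ℝ) := by
      rw [Nat.cast_sub hmι]; linarith
    have := Nat.ceil_le.2 this
    omega
  obtain ⟨S, -, hS⟩ := exists_subset_card_eq (s := (univ : Finset ι)) (n := j) (by simp; omega)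
  obtain ⟨c₁, hc₁⟩ := exists_card_uncovered_le v hv S univ
  have hR : #(uncovered v S c₁ univ) ≤ m := by
    have := one_sub_inv_pow_mul_le hm (n := n) (by linarith) (Nat.le_ceil _)
    rw [hS, card_univ] at hc₁
    exact_mod_cast hc₁.trans this
  obtain ⟨c₂, hc₂⟩ := exists_uncovered_eq_empty v Sᶜ (uncovered v S c₁ univ)
    (by rw [card_compl, hS]; omega)
  refine ⟨S.piecewise c₁ c₂, fun a => ?_⟩
  have : a ∉ uncovered v (S ∪ Sᶜ) (S.piecewise c₁ c₂) univ := by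
    rw [uncovered_union v disjoint_compl_right, hc₂]
    exact notMem_empty a
  simpa [uncovered] using this

lemma AddChar.map_sum_eq_prod {ι A M : Type*} [AddCommMonoid A] [CommMonoid M]
    (ψ : AddChar A M) (s : Finset ι) (f : ι → A) : ψ (∑ i ∈ s, f i) = ∏ i ∈ s, ψ (f i) := by
  classical
  induction s using Finset.induction_on with
  | empty => simp
  | insert i s hi ih => rw [sum_insert hi, prod_insert hi, map_add_eq_mul, ih]

theorem IsZeroSumFree.exists_addChar_forall_apply_ne {G : Type*} [AddCommGroup G] [Fintype G]
    {k : ℕ} {g : Fin k → G} (hg : IsZeroSumFree g) (c : Fin k → ℂ) :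
    ∃ ψ : AddChar G ℂ, ∀ i, ψ (g i) ≠ c i := by
  classical
  by_contra! hcov
  -- If `c i = 0` the factor is `1` (as `0⁻¹ = 0`), harmlessly: character values are never `0`.
  have hvanish : ∑ ψ : AddChar G ℂ, ∏ i, (1 - (c i)⁻¹ * ψ (g i)) = 0 :=
    sum_eq_zero fun ψ _ => by
      obtain ⟨i, hi⟩ := hcov ψ
      refine prod_eq_zero (mem_univ i) ?_
      rw [← hi, inv_mul_cancel₀ (ψ.val_isUnit _).ne_zero, sub_self]
  have hexpand : ∑ ψ : AddChar G ℂ, ∏ i, (1 - (c i)⁻¹ * ψ (g i)) = Fintype.card G := by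
    calc _ = ∑ T ∈ univ.powerset, (-1) ^ #T * (∏ i ∈ T, (c i)⁻¹) *
          ∑ ψ : AddChar G ℂ, ψ (∑ i ∈ T, g i) := by
          simp_rw [prod_sub, prod_const_one, mul_one, prod_mul_distrib,
            ← AddChar.map_sum_eq_prod]
          rw [sum_comm]
          simp_rw [mul_sum, mul_assoc]
      _ = Fintype.card G := by
          rw [sum_eq_single_of_mem ∅ (empty_mem_powerset _)]
          · simp
          · intro T _ hT
            rw [AddChar.sum_apply_eq_zero_iff_ne_zero.2 (hg T (nonempty_iff_ne_empty.2 hT)),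
              mul_zero]
  exact Nat.cast_ne_zero.2 Fintype.card_ne_zero (hexpand.symm.trans hvanish)

theorem IsZeroSumFree.lt_mul_one_add_log {G : Type*} [AddCommGroup G] [Fintype G] {m k : ℕ}
    (hm : 0 < m) (hmG : m ≤ Fintype.card G) (hmx : ∀ x : G, m • x = 0) {g : Fin k → G}
    (hg : IsZeroSumFree g) : (k : ℝ) < m * (1 + log (Fintype.card G / m)) := by
  by_contra! hk
  have hroots : #(Polynomial.nthRootsFinset m (1 : ℂ)) = m :=
    (Complex.isPrimitiveRoot_exp m hm.ne').card_nthRootsFinset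
  obtain ⟨c, hc⟩ := exists_forall_exists_apply_eq_of_le (fun i (ψ : AddChar G ℂ) => ψ (g i))
    (s := Polynomial.nthRootsFinset m (1 : ℂ))
    (fun i ψ => by
      rw [Polynomial.mem_nthRootsFinset hm, ← AddChar.map_nsmul_eq_pow, hmx,
        AddChar.map_zero_eq_one])
    (card_pos.1 (by rw [hroots]; exact hm)) (by rwa [hroots, AddChar.card_eq])
    (by rwa [hroots, AddChar.card_eq, Fintype.card_fin])
  obtain ⟨ψ, hψ⟩ := hg.exists_addChar_forall_apply_ne c
  obtain ⟨i, hi⟩ := hc ψ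
  exact hψ i hi

lemma davenport_lt_of_forall {G : Type*} [AddCommGroup G] [Fintype G] {B : ℝ}
    (h : ∀ k (g : Fin k → G), IsZeroSumFree g → (k : ℝ) < B) : (davenport G : ℝ) < B := by
  have hne : {k | ∃ g : Fin k → G, IsZeroSumFree g}.Nonempty :=
    ⟨0, Fin.elim0, fun _ ⟨i, _⟩ => i.elim0⟩
  have hbdd : BddAbove {k | ∃ g : Fin k → G, IsZeroSumFree g} :=
    ⟨⌈B⌉₊, fun k ⟨g, hg⟩ => by exact_mod_cast (h k g hg).le.trans (Nat.le_ceil B)⟩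
  obtain ⟨g, hg⟩ := Nat.sSup_mem hne hbdd
  exact h _ g hg

lemma AddMonoid.exponent_eq_of_isGreatest_range_addOrderOf {G : Type*} [AddCommGroup G]
    [Finite G] {m : ℕ} (hm : IsGreatest (Set.range (addOrderOf : G → ℕ)) m) :
    AddMonoid.exponent G = m := by
  have hpos : ∀ y : G, 0 < addOrderOf y := addOrderOf_pos
  rw [AddMonoid.exponent_eq_iSup_addOrderOf hpos, iSup]
  exact hm.csSup_eq

theorem davenport_lt_EmdeBoas_Kruyswijk {G : Type*} [AddCommGroup G] [Fintype G]
    (m : ℕ) (hm : IsGreatest (Set.range (addOrderOf : G → ℕ)) m) :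
    (davenport G : ℝ) < m * (1 + Real.log ((Fintype.card G : ℝ) / m)) := by
  obtain ⟨x, rfl⟩ := hm.1
  refine davenport_lt_of_forall fun k g hg =>
    hg.lt_mul_one_add_log (addOrderOf_pos x) addOrderOf_le_card_univ fun y => ?_
  rw [← AddMonoid.exponent_eq_of_isGreatest_range_addOrderOf hm]
  exact AddMonoid.exponent_nsmul_eq_zero y
end

section
/- Let G be a finite abelian group with n = n(G), and let r > k > n be integers. Then any sequence of r elements of G contains at least C(r,k)/C(r,n) distinct subsequences of length at most k and at least k − n whose sum is the identity. -/
/-!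
Removing nonempty zero-sum subsets from a `k`-subset `T` of the indices as long as possible
leaves at most `n` indices, so `T` contains a zero-sum subset `S` with `k - n ≤ |S| ≤ k`.
Choosing such an `S` for every `T` and noting that `T` is determined by the `(k - |S|)`-set
`T \ S` outside `S`, each `S` arises from at most `C(r - |S|, k - |S|) ≤ C(r, n)` sets `T`.
-/

open Finset

section ZeroSumFree

variable {G : Type*} [AddCommGroup G] [Fintype G]

theorem IsZeroSumFree.le_card {m : ℕ} {g : Fin m → G} (h : IsZeroSumFree g) :
    m ≤ Fintype.card G := by
  -- Two equal prefix sums would leave a nonempty zero-sum block between them.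
  have hinj : Function.Injective fun i : Fin m => ∑ j ∈ Iic i, g j := by
    intro i i' hii
    by_contra hne
    wlog hlt : i < i' generalizing i i'
    · exact this hii.symm (Ne.symm hne) (lt_of_le_of_ne (not_lt.mp hlt) (Ne.symm hne))
    refine h (Iic i' \ Iic i) ⟨i', by simp [hlt.not_ge]⟩ ?_
    rw [sum_sdiff_eq_sub (Iic_subset_Iic.mpr hlt.le)]
    exact sub_eq_zero.mpr hii.symm
  simpa using Fintype.card_le_of_injective _ hinj

theorem le_davenport {m : ℕ} {g : Fin m → G} (h : IsZeroSumFree g) : m ≤ davenport G :=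
  le_csSup ⟨Fintype.card G, fun _ ⟨_, hg⟩ => hg.le_card⟩ ⟨g, h⟩

variable {ι : Type*}

theorem card_le_davenport {g : ι → G} {T : Finset ι}
    (h : ∀ S ⊆ T, S.Nonempty → ∑ i ∈ S, g i ≠ 0) : #T ≤ davenport G := by
  let e : Fin #T ↪ ι := T.equivFin.symm.toEmbedding.trans (Function.Embedding.subtype _)
  refine le_davenport (g := g ∘ e) fun S hS hsum => h (S.map e) ?_ hS.map ?_
  · intro x hx
    obtain ⟨i, -, rfl⟩ := mem_map.mp hx
    exact (T.equivFin.symm i).2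
  · rwa [sum_map]

theorem exists_zero_sum_subset_card_sdiff_le_davenport [DecidableEq ι] (g : ι → G)
    (T : Finset ι) : ∃ S ⊆ T, ∑ i ∈ S, g i = 0 ∧ #(T \ S) ≤ davenport G := by
  induction T using Finset.strongInduction with
  | H T ih =>
  by_cases hfree : ∀ S ⊆ T, S.Nonempty → ∑ i ∈ S, g i ≠ 0
  · exact ⟨∅, empty_subset _, sum_empty, by simpa using card_le_davenport hfree⟩
  push Not at hfree
  obtain ⟨S₀, hS₀T, hS₀, hsum₀⟩ := hfree
  obtain ⟨S₁, hS₁, hsum₁, hcard⟩ := ih _ (sdiff_ssubset hS₀T hS₀)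
  have hdisj : Disjoint S₀ S₁ := disjoint_of_subset_right hS₁ disjoint_sdiff
  refine ⟨S₀ ∪ S₁, union_subset hS₀T (hS₁.trans sdiff_subset), ?_, ?_⟩
  · rw [sum_union hdisj, hsum₀, hsum₁, add_zero]
  · rwa [sdiff_union_distrib, ← Finset.sdiff_sdiff_left']

end ZeroSumFree

theorem card_powersetCard_filter_superset_le {α : Type*} [Fintype α] [DecidableEq α] (k : ℕ)
    (S : Finset α) :
    #{T ∈ powersetCard k univ | S ⊆ T} ≤ (Fintype.card α - #S).choose (k - #S) := by
  calc #{T ∈ powersetCard k univ | S ⊆ T}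
      ≤ #(powersetCard (k - #S) (univ \ S)) := card_le_card_of_injOn (· \ S) ?_ ?_
    _ = (Fintype.card α - #S).choose (k - #S) := by
      rw [card_powersetCard, card_sdiff_of_subset (subset_univ S), card_univ]
  · intro T hT
    obtain ⟨hT, hST⟩ := mem_filter.mp (mem_coe.mp hT)
    simp only [mem_coe, mem_powersetCard] at hT ⊢
    exact ⟨sdiff_subset_sdiff (subset_univ T) le_rfl, by rw [card_sdiff_of_subset hST, hT.2]⟩
  · intro T hT T' hT' hTT'
    rw [← sdiff_union_of_subset (mem_filter.mp hT).2,
      ← sdiff_union_of_subset (mem_filter.mp hT').2]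
    exact congrArg (· ∪ S) hTT'

theorem choose_sub_sub_le_choose {r k n s : ℕ} (hsk : s ≤ k) (hkr : k ≤ r) (hks : k ≤ s + n)
    (hnk : n ≤ k) : (r - s).choose (k - s) ≤ r.choose n :=
  calc (r - s).choose (k - s) = (r - k + (k - s)).choose (k - s) := by
        rw [show r - s = r - k + (k - s) by omega]
    _ = (r - k + (k - s)).choose (r - k) := Nat.choose_symm_add.symm
    _ ≤ (r - k + n).choose (r - k) := Nat.choose_le_choose _ (by omega)
    _ = (r - k + n).choose n := Nat.choose_symm_add
    _ ≤ r.choose n := Nat.choose_le_choose _ (by omega)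

open Finset Classical in
theorem many_zero_sum_subsequences {G : Type*} [AddCommGroup G] [Fintype G]
    (n : ℕ) (hn : n = davenport G) (r k : ℕ) (hkn : n < k) (hrk : k < r)
    (g : Fin r → G) :
    ((r.choose k : ℝ) / (r.choose n : ℝ)) ≤
      ((univ.filter (fun S : Finset (Fin r) =>
        k - n ≤ S.card ∧ S.card ≤ k ∧ ∑ i ∈ S, g i = 0)).card : ℝ) := by
  set good := univ.filter fun S : Finset (Fin r) =>
    k - n ≤ S.card ∧ S.card ≤ k ∧ ∑ i ∈ S, g i = 0
  choose F hFT hF0 hFcard using exists_zero_sum_subset_card_sdiff_le_davenport g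
  have hmaps : ∀ T ∈ powersetCard k univ, F T ∈ good := by
    intro T hT
    have := card_sdiff_of_subset (hFT T)
    have := card_le_card (hFT T)
    have := hFcard T
    simp only [mem_powersetCard, good, mem_filter] at hT ⊢
    exact ⟨mem_univ _, by omega, by omega, hF0 T⟩
  have hfiber : ∀ S ∈ good, #{T ∈ powersetCard k univ | F T = S} ≤ r.choose n := by
    intro S hS
    simp only [good, mem_filter] at hS
    calc #{T ∈ powersetCard k univ | F T = S}
        ≤ #{T ∈ powersetCard k univ | S ⊆ T} :=
          card_le_card (monotone_filter_right _ fun T _ hT => hT ▸ hFT T)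
      _ ≤ (r - #S).choose (k - #S) := by simpa using card_powersetCard_filter_superset_le k S
      _ ≤ r.choose n := choose_sub_sub_le_choose (by omega) hrk.le (by omega) hkn.le
  have hcount := card_le_mul_card_image_of_maps_to hmaps _ hfiber
  rw [card_powersetCard, card_univ, Fintype.card_fin] at hcount
  rw [div_le_iff₀ (by exact_mod_cast Nat.choose_pos (by omega)), mul_comm]
  exact_mod_cast hcount
end
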